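/- Let τ > 0, let K ⊆ ℝⁿ, let h₁ : ℝⁿ → ℝ be continuously differentiable, let e₂ : ℝⁿ → ℝⁿ and C ∈ ℝⁿ. Fix t ∈ ℝ and let x : ℝ → ℝⁿ be continuously differentiable on [t−τ, t] with x(θ) ∈ K and |x′(θ)| ≤ C coordinatewise for all θ ∈ [t−τ, t]. Assume that coordinatewise |∇h₁(b)| ≤ e₂(a) for all a, b ∈ K. Then ∫_{t−τ}^{t} h₁(x(θ)) dθ ≥ τ·h₁(x(t)) − (τ²/2)·e₂(x(t))ᵀC; consequently, for any h₀ : ℝⁿ → ℝ, h₀(x(t)) + ∫_{t−τ}^{t} h₁(x(θ)) dθ ≥ h₀(x(t)) + τ·h₁(x(t)) − (τ²/2)·e₂(x(t))ᵀC. -/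

import Mathlib

/-!
Along the trajectory, `θ ↦ h₁ (x θ)` has derivative `∇h₁(x θ) · x'(θ)`, which is bounded in
absolute value by `M = ∑ᵢ e₂(x t)ᵢ Cᵢ` since each term is bounded coordinatewise. By the mean
value theorem `h₁ (x θ) ≥ h₁ (x t) - (t - θ) M` on `[t - τ, t]`, and integrating this affine lower
bound gives `τ h₁ (x t) - (τ² / 2) M`.
-/

open intervalIntegral Set

lemma LinearMap.apply_eq_sum_mul_single {ι : Type*} [Fintype ι] [DecidableEq ι]
    (f : (ι → ℝ) →ₗ[ℝ] ℝ) (v : ι → ℝ) : f v = ∑ i, v i * f (Pi.single i 1) := by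
  conv_lhs => rw [← Finset.univ_sum_single v]
  simp only [map_sum]
  refine Finset.sum_congr rfl fun i _ => ?_
  rw [← smul_eq_mul, ← map_smul, ← Pi.single_smul, smul_eq_mul, mul_one]

lemma LinearMap.abs_apply_le_sum_mul {ι : Type*} [Fintype ι] [DecidableEq ι]
    (f : (ι → ℝ) →ₗ[ℝ] ℝ) {v e C : ι → ℝ} (hv : ∀ i, |v i| ≤ C i)
    (hf : ∀ i, |f (Pi.single i 1)| ≤ e i) : |f v| ≤ ∑ i, e i * C i := by
  rw [f.apply_eq_sum_mul_single]
  refine (Finset.abs_sum_le_sum_abs _ _).trans (Finset.sum_le_sum fun i _ => ?_)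
  rw [abs_mul, mul_comm (e i)]
  exact mul_le_mul (hv i) (hf i) (abs_nonneg _) ((abs_nonneg _).trans (hv i))

lemma integral_sub_sub_mul (a b c M : ℝ) :
    ∫ θ in a..b, (c - (b - θ) * M) = (b - a) * c - (b - a) ^ 2 / 2 * M := by
  have h : Continuous fun θ : ℝ => (b - θ) * M := by fun_prop
  rw [integral_sub intervalIntegrable_const (h.intervalIntegrable _ _), integral_const,
    integral_mul_const, integral_comp_sub_left (fun θ => θ), integral_id, smul_eq_mul]
  ring

lemma sub_sub_mul_le_of_abs_deriv_le {g g' : ℝ → ℝ} {a b M : ℝ}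
    (hg : ∀ s ∈ Icc a b, HasDerivWithinAt g (g' s) (Icc a b) s)
    (hM : ∀ s ∈ Icc a b, |g' s| ≤ M) {θ : ℝ} (hθ : θ ∈ Icc a b) :
    g b - (b - θ) * M ≤ g θ := by
  have hb : b ∈ Icc a b := ⟨hθ.1.trans hθ.2, le_rfl⟩
  have hmv := (convex_Icc a b).norm_image_sub_le_of_norm_hasDerivWithin_le hg hM hθ hb
  rw [Real.norm_eq_abs, Real.norm_eq_abs, abs_of_nonneg (sub_nonneg.2 hθ.2)] at hmv
  linarith [(abs_le.1 hmv).2]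

lemma mul_sub_le_integral_of_abs_deriv_le {g g' : ℝ → ℝ} {a b M : ℝ} (hab : a ≤ b)
    (hg : ∀ s ∈ Icc a b, HasDerivWithinAt g (g' s) (Icc a b) s)
    (hM : ∀ s ∈ Icc a b, |g' s| ≤ M) :
    (b - a) * g b - (b - a) ^ 2 / 2 * M ≤ ∫ θ in a..b, g θ := by
  have hcont : ContinuousOn g (uIcc a b) := by
    rw [uIcc_of_le hab]
    exact fun s hs => (hg s hs).continuousWithinAt
  rw [← integral_sub_sub_mul]
  have haffine : Continuous fun θ => g b - (b - θ) * M := by fun_prop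
  exact integral_mono_on hab (haffine.intervalIntegrable _ _) hcont.intervalIntegrable
    fun θ hθ => sub_sub_mul_le_of_abs_deriv_le hg hM hθ

theorem stmt_4_general {n : ℕ} (τ : ℝ) (hτ : 0 < τ) (K : Set (Fin n → ℝ))
    (h₁ : (Fin n → ℝ) → ℝ) (hh₁ : ContDiff ℝ 1 h₁)
    (e₂ : (Fin n → ℝ) → (Fin n → ℝ)) (C : Fin n → ℝ)
    (t : ℝ) (x x' : ℝ → (Fin n → ℝ))
    (hx : ∀ θ ∈ Set.Icc (t - τ) t, HasDerivAt x (x' θ) θ)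
    (hxK : ∀ θ ∈ Set.Icc (t - τ) t, x θ ∈ K)
    (hx'C : ∀ θ ∈ Set.Icc (t - τ) t, ∀ i, |x' θ i| ≤ C i)
    (he₂ : ∀ a ∈ K, ∀ b ∈ K, ∀ i, |fderiv ℝ h₁ b (Pi.single i 1)| ≤ e₂ a i) :
    τ * h₁ (x t) - (τ ^ 2 / 2) * ∑ i, e₂ (x t) i * C i ≤ (∫ θ in (t - τ)..t, h₁ (x θ)) ∧
    ∀ h₀ : (Fin n → ℝ) → ℝ,
      h₀ (x t) + τ * h₁ (x t) - (τ ^ 2 / 2) * ∑ i, e₂ (x t) i * C i ≤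
        h₀ (x t) + ∫ θ in (t - τ)..t, h₁ (x θ) := by
  have hxt : x t ∈ K := hxK t ⟨by linarith, le_rfl⟩
  have hderiv : ∀ s ∈ Icc (t - τ) t, HasDerivWithinAt (fun θ => h₁ (x θ))
      (fderiv ℝ h₁ (x s) (x' s)) (Icc (t - τ) t) s := fun s hs =>
    ((hh₁.differentiable one_ne_zero _).hasFDerivAt.comp_hasDerivAt s (hx s hs)).hasDerivWithinAt
  have hbound : ∀ s ∈ Icc (t - τ) t,
      |fderiv ℝ h₁ (x s) (x' s)| ≤ ∑ i, e₂ (x t) i * C i := fun s hs =>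
    (fderiv ℝ h₁ (x s) : (Fin n → ℝ) →ₗ[ℝ] ℝ).abs_apply_le_sum_mul (hx'C s hs)
      (he₂ _ hxt _ (hxK s hs))
  have key := mul_sub_le_integral_of_abs_deriv_le (by linarith) hderiv hbound
  rw [sub_sub_cancel] at key
  exact ⟨key, fun h₀ => by linarith⟩

/-- Lower bound on the integral term of the reach-avoid barrier functional
(derivation of the boundary condition (2b) from (6b) in the proof of Theorem 2):
under the coordinatewise bounds `|∇h₁(b)| ≤ e₂(a)` on `K` and `|x'| ≤ C` on
`[t-τ, t]`, `∫_{t-τ}^{t} h₁(x θ) dθ ≥ τ·h₁(x t) - (τ²/2)·e₂(x t)ᵀ C`; consequently,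
for any `h₀`, `h₀(x t) + ∫_{t-τ}^{t} h₁(x θ) dθ ≥ h₀(x t) + τ·h₁(x t) - (τ²/2)·e₂(x t)ᵀ C`. -/
theorem stmt_4 {n : ℕ} (τ : ℝ) (hτ : 0 < τ) (K : Set (Fin n → ℝ))
    (h₁ : (Fin n → ℝ) → ℝ) (hh₁ : ContDiff ℝ 1 h₁)
    (e₂ : (Fin n → ℝ) → (Fin n → ℝ)) (C : Fin n → ℝ)
    (t : ℝ) (x x' : ℝ → (Fin n → ℝ))
    (hx : ∀ θ ∈ Set.Icc (t - τ) t, HasDerivAt x (x' θ) θ)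
    (hx'c : ContinuousOn x' (Set.Icc (t - τ) t))
    (hxK : ∀ θ ∈ Set.Icc (t - τ) t, x θ ∈ K)
    (hx'C : ∀ θ ∈ Set.Icc (t - τ) t, ∀ i, |x' θ i| ≤ C i)
    (he₂ : ∀ a ∈ K, ∀ b ∈ K, ∀ i, |fderiv ℝ h₁ b (Pi.single i 1)| ≤ e₂ a i) :
    τ * h₁ (x t) - (τ ^ 2 / 2) * ∑ i, e₂ (x t) i * C i ≤ (∫ θ in (t - τ)..t, h₁ (x θ)) ∧
    ∀ h₀ : (Fin n → ℝ) → ℝ,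
      h₀ (x t) + τ * h₁ (x t) - (τ ^ 2 / 2) * ∑ i, e₂ (x t) i * C i ≤
        h₀ (x t) + ∫ θ in (t - τ)..t, h₁ (x θ) :=
  stmt_4_general τ hτ K h₁ hh₁ e₂ C t x x' hx hxK hx'C he₂
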